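/- arXiv:1908.05413 — 5 statements merged into one kernel-verified Lean document; each statement's English description precedes it below -/
import Mathlib

section
/- If (A,a) and (B,b) represent the same elliptical cone, i.e., the sets {(x,z) ∈ ℝ²×ℝ : z² = (x−a)ᵀA(x−a)} and {(x,z) : z² = (x−b)ᵀB(x−b)} coincide, then A = B and a = b. -/
open Matrix

/-- The elliptical cone associated to a positive definite matrix `A` and apex
location `a`: the set of points `(x, z) ∈ ℝ² × ℝ` with `z² = (x−a)ᵀA(x−a)`. -/
def ellipticalCone (A : Matrix (Fin 2) (Fin 2) ℝ) (a : Fin 2 → ℝ) :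
    Set ((Fin 2 → ℝ) × ℝ) :=
  {p | p.2 ^ 2 = (p.1 - a) ⬝ᵥ A.mulVec (p.1 - a)}

theorem cone_representation_unique
    (A B : Matrix (Fin 2) (Fin 2) ℝ) (a b : Fin 2 → ℝ)
    (hA : A.PosDef) (hB : B.PosDef)
    (h : ellipticalCone A a = ellipticalCone B b) :
    A = B ∧ a = b := by
  have key : ∀ x, (x - a) ⬝ᵥ A.mulVec (x - a) = (x - b) ⬝ᵥ B.mulVec (x - b) := by
    intro x
    have h0 : (0:ℝ) ≤ (x - a) ⬝ᵥ A.mulVec (x - a) := by simpa using hA.posSemidef.dotProduct_mulVec_nonneg (x - a)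
    have hm := Set.ext_iff.mp h (x, Real.sqrt ((x - a) ⬝ᵥ A.mulVec (x - a)))
    simp only [ellipticalCone, Set.mem_setOf_eq, Real.sq_sqrt h0] at hm
    exact hm.mp trivial
  -- a = b
  have hab : a = b := by
    have h1 := key a
    simp only [sub_self] at h1
    have hz : (a - b) ⬝ᵥ B.mulVec (a - b) = 0 := by
      rw [← h1]; simp [dotProduct]
    by_contra hne
    have : a - b ≠ 0 := sub_ne_zero.mpr hne
    have hp := hB.dotProduct_mulVec_pos this
    rw [star_trivial, hz] at hp
    exact lt_irrefl _ hp
  subst hab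
  refine ⟨?_, rfl⟩
  have keyQ : ∀ y : Fin 2 → ℝ, y ⬝ᵥ A.mulVec y = y ⬝ᵥ B.mulVec y := by
    intro y
    have := key (y + a)
    simpa using this
  have sA : A 1 0 = A 0 1 := by
    have := congrFun (congrFun hA.1 0) 1
    simpa using this
  have sB : B 1 0 = B 0 1 := by
    have := congrFun (congrFun hB.1 0) 1
    simpa using this
  have e0 := keyQ ![1, 0]
  have e1 := keyQ ![0, 1]
  have e2 := keyQ ![1, 1]
  simp [dotProduct, mulVec, Fin.sum_univ_two] at e0 e1 e2
  ext i j
  fin_cases i <;> fin_cases j <;> simp <;> linarith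
end

section
/- Let A and B be 2×2 symmetric positive definite real matrices with det(A)=det(B)=1 and A ≠ B, and let C = A − B. Then the set {x ∈ ℝ² : (x−a)ᵀA(x−a) = (x−b)ᵀB(x−b)} is, after the translation x ↦ x + C⁻¹(Aa−Bb), the zero set of a quadratic form xᵀCx = k for some constant k, where C is symmetric with negative determinant (hence the set is a hyperbola or a degenerate hyperbola). -/
open Matrix

lemma detlem (p q r s t u : ℝ) (hp : 0 < p) (hs : 0 < s)
    (h1 : p*r - q*q = 1) (h2 : s*u - t*t = 1)
    (hne : ¬(p = s ∧ q = t ∧ r = u)) :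
    (p-s)*(r-u) - (q-t)*(q-t) < 0 := by
  have hr : 0 < r := by nlinarith [sq_nonneg q]
  have hu : 0 < u := by nlinarith [sq_nonneg t]
  by_cases hqt : q = t
  · subst hqt
    have hps : p ≠ s := by
      intro h; subst h
      apply hne
      refine ⟨rfl, rfl, ?_⟩
      have : p * r = p * u := by linarith
      exact mul_left_cancel₀ hp.ne' this
    have hps0 : p - s ≠ 0 := sub_ne_zero.mpr hps
    have : 0 < (p - s)^2 := by positivity
    nlinarith [mul_pos hp hs, mul_pos hr hu, sq_nonneg (p*u - r*s), mul_pos hp hu, mul_pos hr hs, mul_pos (mul_pos hp hs) hr, mul_pos (mul_pos hp hs) hu]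
  · have hqt0 : q - t ≠ 0 := sub_ne_zero.mpr hqt
    have : 0 < (q - t)^2 := by positivity
    nlinarith [mul_pos (mul_pos hp hu) (mul_pos hr hs), sq_nonneg (p*u - r*s), mul_pos hp hu, mul_pos hr hs, sq_nonneg (p*u + r*s - 2 - 2*q*t), sq_nonneg (q*t+1)]

theorem rectangle_locus_is_hyperbola
    (A B : Matrix (Fin 2) (Fin 2) ℝ) (a b : Fin 2 → ℝ)
    (hA : A.PosDef) (hB : B.PosDef)
    (hdA : A.det = 1) (hdB : B.det = 1) (hne : A ≠ B) :
    ∃ k : ℝ,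
      (∀ x : Fin 2 → ℝ,
        ((x + (A - B)⁻¹.mulVec (A.mulVec a - B.mulVec b)) - a) ⬝ᵥ
            A.mulVec ((x + (A - B)⁻¹.mulVec (A.mulVec a - B.mulVec b)) - a) =
          ((x + (A - B)⁻¹.mulVec (A.mulVec a - B.mulVec b)) - b) ⬝ᵥ
            B.mulVec ((x + (A - B)⁻¹.mulVec (A.mulVec a - B.mulVec b)) - b) ↔
        x ⬝ᵥ (A - B).mulVec x = k) ∧
      (A - B)ᵀ = (A - B) ∧ (A - B).det < 0 := by
  -- symmetry
  have hAs : A 1 0 = A 0 1 := by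
    have := congrFun (congrFun hA.isHermitian 0) 1
    simpa [Matrix.conjTranspose_apply] using this
  have hBs : B 1 0 = B 0 1 := by
    have := congrFun (congrFun hB.isHermitian 0) 1
    simpa [Matrix.conjTranspose_apply] using this
  -- positivity of diagonal entries
  have hA00 : 0 < A 0 0 := by
    have h := hA.dotProduct_mulVec_pos (x := ![1, 0]) (by intro h; simpa using congrFun h 0)
    simpa [Matrix.mulVec, dotProduct, Fin.sum_univ_two] using h
  have hB00 : 0 < B 0 0 := by
    have h := hB.dotProduct_mulVec_pos (x := ![1, 0]) (by intro h; simpa using congrFun h 0)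
    simpa [Matrix.mulVec, dotProduct, Fin.sum_univ_two] using h
  have hdA' : A 0 0 * A 1 1 - A 0 1 * A 0 1 = 1 := by
    rw [Matrix.det_fin_two] at hdA; rw [← hAs] at hdA ⊢; linarith
  have hdB' : B 0 0 * B 1 1 - B 0 1 * B 0 1 = 1 := by
    rw [Matrix.det_fin_two] at hdB; rw [← hBs] at hdB ⊢; linarith
  have hne' : ¬(A 0 0 = B 0 0 ∧ A 0 1 = B 0 1 ∧ A 1 1 = B 1 1) := by
    rintro ⟨h1, h2, h3⟩
    apply hne
    ext i j
    fin_cases i <;> fin_cases j <;> simp_all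
  have hdet : (A - B).det < 0 := by
    rw [Matrix.det_fin_two]
    simp only [Matrix.sub_apply]
    have := detlem (A 0 0) (A 0 1) (A 1 1) (B 0 0) (B 0 1) (B 1 1) hA00 hB00 hdA' hdB' hne'
    rw [hAs, hBs]
    linarith
  have hCs : (A - B)ᵀ = (A - B) := by
    have := hA.isHermitian.sub hB.isHermitian
    simpa [Matrix.IsHermitian] using this
  have hUnit : IsUnit (A - B).det := isUnit_iff_ne_zero.mpr hdet.ne
  set c : Fin 2 → ℝ := (A - B)⁻¹.mulVec (A.mulVec a - B.mulVec b) with hc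
  have hCc : (A - B).mulVec c = A.mulVec a - B.mulVec b := by
    rw [hc, Matrix.mulVec_mulVec, Matrix.mul_nonsing_inv _ hUnit, Matrix.one_mulVec]
  have hc0 := congrFun hCc 0
  have hc1 := congrFun hCc 1
  simp only [Matrix.mulVec, dotProduct, Fin.sum_univ_two, Matrix.sub_apply,
    Pi.sub_apply] at hc0 hc1
  refine ⟨(c - b) ⬝ᵥ B.mulVec (c - b) - (c - a) ⬝ᵥ A.mulVec (c - a), ?_, hCs, hdet⟩
  intro x
  have key : (x + c - a) ⬝ᵥ A *ᵥ (x + c - a) - (x + c - b) ⬝ᵥ B *ᵥ (x + c - b)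
      = x ⬝ᵥ (A - B) *ᵥ x -
        ((c - b) ⬝ᵥ B.mulVec (c - b) - (c - a) ⬝ᵥ A.mulVec (c - a)) := by
    rw [hAs] at hc1
    rw [hBs] at hc1
    simp only [Matrix.mulVec, dotProduct, Fin.sum_univ_two, Matrix.sub_apply,
      Pi.sub_apply, Pi.add_apply]
    rw [hAs, hBs]
    linear_combination (2 * x 0) * hc0 + (2 * x 1) * hc1
  rw [← sub_eq_zero, key, sub_eq_zero]
end

section
/- If A and B are 2×2 symmetric positive definite matrices with det(A)=det(B)=1 and A ≠ B, and if a = b, then the set {x ∈ ℝ² : (x−a)ᵀA(x−a) = (x−a)ᵀB(x−a)} is the union of two distinct lines through a (a degenerate hyperbola), since det(A−B) < 0. -/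
open Matrix

private lemma quad_factor (p q r : ℝ) (hd : p * r - q ^ 2 < 0) :
    ∃ v w : Fin 2 → ℝ, LinearIndependent ℝ ![v, w] ∧
      ∀ y : Fin 2 → ℝ,
        (p * (y 0) ^ 2 + 2 * q * (y 0) * (y 1) + r * (y 1) ^ 2 = 0 ↔
          ((∃ t : ℝ, y = t • v) ∨ (∃ t : ℝ, y = t • w))) := by
  by_cases hp : p = 0
  · subst hp
    have hq : q ≠ 0 := by intro h; rw [h] at hd; nlinarith
    refine ⟨![1, 0], ![-r, 2 * q], ?_, ?_⟩
    · rw [linearIndependent_fin2]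
      refine ⟨?_, fun t ht => ?_⟩
      · intro h
        have := congrFun h 1
        simp at this
        exact hq this
      · have h1 := congrFun ht 1
        simp at h1
        rcases h1 with h1 | h1
        · have h0 := congrFun ht 0
          rw [h1] at h0
          simp at h0
        · exact hq h1
    · intro y
      constructor
      · intro h
        have : y 1 * (2 * q * y 0 + r * y 1) = 0 := by ring_nf; ring_nf at h; linarith
        rcases mul_eq_zero.mp this with h1 | h1
        · left
          exact ⟨y 0, by funext i; fin_cases i <;> simp [h1]⟩
        · right
          refine ⟨y 1 / (2 * q), ?_⟩
          funext i; fin_cases i <;> simp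
          · field_simp; nlinarith
          · field_simp
      · rintro (⟨t, rfl⟩ | ⟨t, rfl⟩) <;>
          · simp only [Pi.smul_apply, Matrix.cons_val_zero, Matrix.cons_val_one,
              Matrix.head_cons, smul_eq_mul]
            ring
  · -- p ≠ 0
    have hd0 : 0 < q ^ 2 - p * r := by linarith
    obtain ⟨d, hdd⟩ : ∃ x : ℝ, x = Real.sqrt (q ^ 2 - p * r) := ⟨_, rfl⟩
    have hdpos : 0 < d := hdd ▸ Real.sqrt_pos.mpr hd0
    have hdsq : d ^ 2 = q ^ 2 - p * r := hdd ▸ Real.sq_sqrt hd0.le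
    obtain ⟨α, hα⟩ : ∃ x : ℝ, x = (-q + d) / p := ⟨_, rfl⟩
    obtain ⟨β, hβ⟩ : ∃ x : ℝ, x = (-q - d) / p := ⟨_, rfl⟩
    have hsub : α - β = 2 * d / p := by rw [hα, hβ]; field_simp; ring
    have hαβ : α ≠ β := by
      intro h
      rw [h, sub_self] at hsub
      have : (2 : ℝ) * d = 0 := by
        field_simp at hsub
        linarith [hsub]
      linarith
    have e1 : (α + β) * p = -(2 * q) := by rw [hα, hβ]; field_simp; ring
    have e2 : α * β * p = r := by
      rw [hα, hβ]
      field_simp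
      linear_combination (-1) * hdsq
    refine ⟨![α, 1], ![β, 1], ?_, ?_⟩
    · rw [linearIndependent_fin2]
      refine ⟨?_, fun t ht => ?_⟩
      · intro h
        have := congrFun h 1
        simp at this
      · have h1 := congrFun ht 1
        simp at h1
        have h0 := congrFun ht 0
        rw [h1] at h0
        simp at h0
        exact hαβ h0.symm
    · intro y
      have key : p * (y 0) ^ 2 + 2 * q * (y 0) * (y 1) + r * (y 1) ^ 2 =
          p * (y 0 - α * y 1) * (y 0 - β * y 1) := by
        linear_combination y 0 * y 1 * e1 - (y 1) ^ 2 * e2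
      rw [key]
      constructor
      · intro h
        rcases mul_eq_zero.mp h with h1 | h1
        · rcases mul_eq_zero.mp h1 with h2 | h2
          · exact absurd h2 hp
          · left
            refine ⟨y 1, ?_⟩
            funext i; fin_cases i <;> simp
            linarith
        · right
          refine ⟨y 1, ?_⟩
          funext i; fin_cases i <;> simp
          linarith
      · rintro (⟨t, rfl⟩ | ⟨t, rfl⟩) <;>
          · simp only [Pi.smul_apply, Matrix.cons_val_zero, Matrix.cons_val_one,
              Matrix.head_cons, smul_eq_mul]
            ring


private lemma det_key (a b c d e f : ℝ) (ha : 0 < a) (hc : 0 < c) (hd : 0 < d) (hf : 0 < f)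
    (h1 : a * c - b * b = 1) (h2 : d * f - e * e = 1)
    (hne : ¬(a = d ∧ b = e ∧ c = f)) :
    (a - d) * (c - f) - (b - e) * (b - e) < 0 := by
  by_contra hcon
  push_neg at hcon
  have hS : a * f + d * c ≤ 2 + 2 * (b * e) := by nlinarith
  have hP : (a * f) * (d * c) = (1 + b * b) * (1 + e * e) := by nlinarith
  have hafpos : 0 < a * f := mul_pos ha hf
  have hdcpos : 0 < d * c := mul_pos hd hc
  have hbe2 : (b - e) * (b - e) ≤ 0 := by
    nlinarith [sq_nonneg (a * f - d * c), sq_nonneg (a * f + d * c)]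
  have hbe : b = e := by nlinarith [sq_nonneg (b - e)]
  subst hbe
  have hafdc : a * f = d * c := by
    nlinarith [sq_nonneg (a * f - d * c)]
  have haf : a * f = 1 + b * b := by
    rcases mul_self_eq_mul_self_iff.mp (show (a * f) * (a * f) = (1 + b * b) * (1 + b * b) by nlinarith) with h | h
    · exact h
    · nlinarith
  have hcf : c = f := by
    have hac : a * c = 1 + b * b := by linarith
    have := hac.trans haf.symm
    exact mul_left_cancel₀ ha.ne' this
  subst hcf
  have had : a = d := by
    have : a * c = d * c := by linarith
    exact mul_right_cancel₀ hc.ne' this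
  exact hne ⟨had, rfl, rfl⟩

theorem rectangle_locus_degenerate_hyperbola
    (A B : Matrix (Fin 2) (Fin 2) ℝ) (a : Fin 2 → ℝ)
    (hA : A.PosDef) (hB : B.PosDef)
    (hdA : A.det = 1) (hdB : B.det = 1) (hne : A ≠ B) :
    (A - B).det < 0 ∧
    ∃ v w : Fin 2 → ℝ, LinearIndependent ℝ ![v, w] ∧
      {x : Fin 2 → ℝ |
          (x - a) ⬝ᵥ A.mulVec (x - a) = (x - a) ⬝ᵥ B.mulVec (x - a)} =
        {x : Fin 2 → ℝ | ∃ t : ℝ, x = a + t • v} ∪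
          {x : Fin 2 → ℝ | ∃ t : ℝ, x = a + t • w} := by
  have hAsym : A 1 0 = A 0 1 := by
    have h := congrFun (congrFun hA.1 0) 1
    simpa [Matrix.conjTranspose_apply] using h
  have hBsym : B 1 0 = B 0 1 := by
    have h := congrFun (congrFun hB.1 0) 1
    simpa [Matrix.conjTranspose_apply] using h
  have diagpos : ∀ (M : Matrix (Fin 2) (Fin 2) ℝ), M.PosDef → ∀ i, 0 < M i i := by
    intro M hM i
    have hx : (Pi.single i 1 : Fin 2 → ℝ) ≠ 0 := by
      intro h
      have := congrFun h i
      simp at this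
    exact hM.diag_pos
  have hA00 := diagpos A hA 0
  have hA11 := diagpos A hA 1
  have hB00 := diagpos B hB 0
  have hB11 := diagpos B hB 1
  rw [Matrix.det_fin_two] at hdA hdB
  have hentry : ¬(A 0 0 = B 0 0 ∧ A 0 1 = B 0 1 ∧ A 1 1 = B 1 1) := by
    rintro ⟨h1, h2, h3⟩
    apply hne
    ext i j
    fin_cases i <;> fin_cases j <;> simp [h1, h2, h3]
    rw [hAsym, hBsym, h2]
  have hdet : (A - B).det < 0 := by
    rw [Matrix.det_fin_two]
    simp only [Matrix.sub_apply]
    rw [hAsym, hBsym]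
    have := det_key (A 0 0) (A 0 1) (A 1 1) (B 0 0) (B 0 1) (B 1 1) hA00 hA11 hB00 hB11
      (by rw [hAsym] at hdA; linarith) (by rw [hBsym] at hdB; linarith) hentry
    nlinarith [this]
  refine ⟨hdet, ?_⟩
  obtain ⟨v, w, hvw, hiff⟩ := quad_factor (A 0 0 - B 0 0) (A 0 1 - B 0 1) (A 1 1 - B 1 1)
    (by
      rw [Matrix.det_fin_two] at hdet
      simp only [Matrix.sub_apply] at hdet
      rw [hAsym, hBsym] at hdet
      nlinarith [hdet])
  refine ⟨v, w, hvw, ?_⟩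
  ext x
  simp only [Set.mem_setOf_eq, Set.mem_union]
  have hy := hiff (x - a)
  have expand : ∀ (M : Matrix (Fin 2) (Fin 2) ℝ) (y : Fin 2 → ℝ),
      y ⬝ᵥ M.mulVec y = y 0 * (M 0 0 * y 0 + M 0 1 * y 1) + y 1 * (M 1 0 * y 0 + M 1 1 * y 1) := by
    intro M y
    simp [dotProduct, Matrix.mulVec, Fin.sum_univ_two]
  have lhs_iff : ((x - a) ⬝ᵥ A.mulVec (x - a) = (x - a) ⬝ᵥ B.mulVec (x - a)) ↔
      ((A 0 0 - B 0 0) * ((x - a) 0) ^ 2 + 2 * (A 0 1 - B 0 1) * ((x - a) 0) * ((x - a) 1)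
        + (A 1 1 - B 1 1) * ((x - a) 1) ^ 2 = 0) := by
    rw [expand A, expand B]
    constructor <;> intro h
    · linear_combination h - ((x - a) 1 * (x - a) 0) * hAsym + ((x - a) 1 * (x - a) 0) * hBsym
    · linear_combination h + ((x - a) 1 * (x - a) 0) * hAsym - ((x - a) 1 * (x - a) 0) * hBsym
  rw [lhs_iff, hy]
  have hshift : ∀ u : Fin 2 → ℝ, (∃ t : ℝ, x - a = t • u) ↔ (∃ t : ℝ, x = a + t • u) :=
    fun u => exists_congr fun t => sub_eq_iff_eq_add'
  rw [hshift, hshift]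
end

section
/- Let λ₁, λ₂ be nonzero real numbers with λ₁λ₂ < 0, and let C = diag(λ₁, λ₂). Then there exist 2×2 symmetric positive definite matrices A and B with det(A) = det(B) = 1 such that A − B = C. -/
open Matrix

lemma posdef_fin_two (p q b : ℝ) (hp : 0 < p) (hd : p * q - b * b = 1) :
    (!![p, b; b, q] : Matrix (Fin 2) (Fin 2) ℝ).PosDef := by
  rw [Matrix.posDef_iff_dotProduct_mulVec]
  constructor
  · ext i j
    fin_cases i <;> fin_cases j <;> simp [Matrix.conjTranspose_apply]
  · intro x hx
    have hx' : x 0 ≠ 0 ∨ x 1 ≠ 0 := by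
      by_contra h
      push_neg at h
      apply hx
      funext i
      fin_cases i <;> simp [h.1, h.2]
    simp [Matrix.mulVec, dotProduct, Fin.sum_univ_two]
    rcases hx' with h | h
    · have hq : 0 < q := by nlinarith [sq_nonneg b]
      nlinarith [sq_nonneg (b * x 0 + q * x 1), mul_self_pos.mpr h, hq,
        mul_pos hq (mul_self_pos.mpr h)]
    · nlinarith [sq_nonneg (p * x 0 + b * x 1), mul_self_pos.mpr h, sq_nonneg (x 0)]

theorem exists_posdef_difference
    (l₁ l₂ : ℝ) (h₁ : l₁ ≠ 0) (h₂ : l₂ ≠ 0) (hprod : l₁ * l₂ < 0) :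
    ∃ A B : Matrix (Fin 2) (Fin 2) ℝ,
      A.PosDef ∧ B.PosDef ∧ A.det = 1 ∧ B.det = 1 ∧
      A - B = Matrix.diagonal ![l₁, l₂] := by
  set t : ℝ := -(l₂ / l₁) with ht_def
  have ht : 0 < t := by
    rw [ht_def, neg_pos, div_neg_iff]
    rcases lt_or_gt_of_ne h₁ with h | h
    · left; exact ⟨by nlinarith, h⟩
    · right; exact ⟨by nlinarith, h⟩
  set s : ℝ := Real.sqrt t with hs_def
  have hs : 0 < s := Real.sqrt_pos.mpr ht
  have hss : s * s = t := Real.mul_self_sqrt ht.le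
  set p : ℝ := |l₁| + 1 / s with hp_def
  have hinv : 0 < 1 / s := by positivity
  have hp : 0 < p := by rw [hp_def]; positivity
  have hpl : 1 / s ≤ p + l₁ := by
    have := neg_abs_le l₁
    simp only [hp_def]; linarith
  have hpl' : 0 < p + l₁ := lt_of_lt_of_le hinv hpl
  set q : ℝ := t * (p + l₁) with hq_def
  have hq : 0 < q := mul_pos ht hpl'
  have hkey : q * l₁ = -l₂ * (p + l₁) := by
    rw [hq_def, ht_def]
    field_simp
    try ring
  have hpq : 1 ≤ p * q := by
    have h1 : 1 / s ≤ p := by simp only [hp_def]; have := abs_nonneg l₁; linarith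
    have : t * (1 / s) * (1 / s) ≤ t * p * (p + l₁) := by
      apply mul_le_mul
      · exact mul_le_mul le_rfl h1 hinv.le (by positivity)
      · exact hpl
      · exact hinv.le
      · positivity
    calc (1 : ℝ) = t * (1 / s) * (1 / s) := by
          rw [← hss]; field_simp
      _ ≤ t * p * (p + l₁) := this
      _ = p * q := by rw [hq_def]; ring
  set b : ℝ := Real.sqrt (p * q - 1) with hb_def
  have hb : b * b = p * q - 1 := Real.mul_self_sqrt (by linarith)
  have hdetB : p * q - b * b = 1 := by linarith
  have hlin : p * l₂ + l₁ * q + l₁ * l₂ = 0 := by nlinarith [hkey]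
  have hdetA : (p + l₁) * (q + l₂) - b * b = 1 := by nlinarith
  refine ⟨!![p + l₁, b; b, q + l₂], !![p, b; b, q],
    posdef_fin_two _ _ _ hpl' hdetA, posdef_fin_two _ _ _ hp hdetB, ?_, ?_, ?_⟩
  · rw [Matrix.det_fin_two_of]; linarith
  · rw [Matrix.det_fin_two_of]; linarith
  · ext i j
    fin_cases i <;> fin_cases j <;>
      simp [Matrix.diagonal, Matrix.sub_apply]
end

section
/- Let A, B be 2×2 symmetric positive definite matrices with det(A) = det(B) = 1 and A ≠ B, and let C = A − B. Then the matrix CA⁻¹B is symmetric and has negative determinant; consequently there exists b ∈ ℝ² with bᵀ(CA⁻¹B)b = 1. -/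
open Matrix

private lemma key_ineq (a d c p q r : ℝ) (ha : 0 < a) (hp : 0 < p)
    (h1 : a * d - c ^ 2 = 1) (h2 : p * q - r ^ 2 = 1)
    (hne : ¬(a = p ∧ d = q ∧ c = r)) :
    2 < a * q + d * p - 2 * c * r := by
  have hd : 0 < d := by nlinarith
  have hq : 0 < q := by nlinarith
  have hst : (a * q) * (d * p) = (1 + c ^ 2) * (1 + r ^ 2) := by
    have : a * d = 1 + c ^ 2 := by linarith
    have h2' : p * q = 1 + r ^ 2 := by linarith
    calc (a * q) * (d * p) = (a * d) * (p * q) := by ring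
      _ = (1 + c ^ 2) * (1 + r ^ 2) := by rw [this, h2']
  have h3 : ((a * q) + (d * p)) ^ 2 ≥ (2 + 2 * c * r) ^ 2 := by
    nlinarith [sq_nonneg (a * q - d * p), sq_nonneg (c - r)]
  have hspos : 0 < a * q + d * p := by positivity
  have hge : 2 ≤ a * q + d * p - 2 * c * r := by nlinarith [h3, hspos]
  rcases lt_or_eq_of_le hge with h | h
  · exact h
  · exfalso
    have hcr : c = r := by
      have hle : (c - r) ^ 2 ≤ 0 := by nlinarith [sq_nonneg (a * q - d * p)]
      have h0 := le_antisymm hle (sq_nonneg _)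
      have := pow_eq_zero_iff (n := 2) (by norm_num) |>.mp h0
      linarith [sub_eq_zero.mp this]
    have hst' : a * q = d * p := by
      have hle : (a * q - d * p) ^ 2 ≤ 0 := by nlinarith [sq_nonneg (c - r)]
      have h0 := le_antisymm hle (sq_nonneg _)
      have := pow_eq_zero_iff (n := 2) (by norm_num) |>.mp h0
      linarith [sub_eq_zero.mp this]
    have hadpq : a * d = p * q := by rw [hcr] at h1; linarith
    have hap : a = p := by
      have h3' : a ^ 2 * (q * d) = p ^ 2 * (q * d) := by
        linear_combination (a * q) * hadpq + (p * q) * hst'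
      have h4 : a ^ 2 = p ^ 2 := mul_right_cancel₀ (ne_of_gt (mul_pos hq hd)) h3'
      nlinarith
    have hdq : d = q := by
      have hmm : a * d = a * q := by rw [hap] at hadpq ⊢; linarith [hadpq]
      exact mul_left_cancel₀ (ne_of_gt ha) hmm
    exact hne ⟨hap, hdq, hcr⟩

private lemma quad_one (m n k : ℝ) (h : m * k - n ^ 2 < 0) :
    ∃ x y : ℝ, m * x ^ 2 + 2 * n * x * y + k * y ^ 2 = 1 := by
  rcases lt_trichotomy k 0 with hk | hk | hk
  · set s : ℝ := k * (m * k - n ^ 2) with hs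
    have hspos : 0 < s := mul_pos_of_neg_of_neg hk h
    refine ⟨k / Real.sqrt s, -n / Real.sqrt s, ?_⟩
    have hsne : Real.sqrt s ≠ 0 := by positivity
    field_simp
    rw [Real.sq_sqrt (by nlinarith)]; ring
  · subst hk
    have hn : n ≠ 0 := by intro h0; rw [h0] at h; norm_num at h
    exact ⟨1, (1 - m) / (2 * n), by field_simp; ring⟩
  · refine ⟨0, 1 / Real.sqrt k, ?_⟩
    have hsq : Real.sqrt k ^ 2 = k := Real.sq_sqrt hk.le
    have hsne : Real.sqrt k ≠ 0 := by positivity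
    rw [div_pow, one_pow, hsq]
    field_simp [hk.ne']
    ring

theorem CAinvB_symm_neg_det
    (A B : Matrix (Fin 2) (Fin 2) ℝ)
    (hA : A.PosDef) (hB : B.PosDef)
    (hdA : A.det = 1) (hdB : B.det = 1) (hne : A ≠ B) :
    ((A - B) * A⁻¹ * B)ᵀ = (A - B) * A⁻¹ * B ∧
    ((A - B) * A⁻¹ * B).det < 0 ∧
    ∃ b : Fin 2 → ℝ, b ⬝ᵥ ((A - B) * A⁻¹ * B).mulVec b = 1 := by
  have hAdet : IsUnit A.det := by rw [hdA]; exact isUnit_one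
  have hAsymm : Aᵀ = A := by have := hA.1; simpa [Matrix.IsSymm] using this
  have hBsymm : Bᵀ = B := by have := hB.1; simpa [Matrix.IsSymm] using this
  have hAinv : A * A⁻¹ = 1 := mul_nonsing_inv A hAdet
  have hM : (A - B) * A⁻¹ * B = B - B * A⁻¹ * B := by
    rw [sub_mul, sub_mul, hAinv, one_mul]
  have hsymmM : ((A - B) * A⁻¹ * B)ᵀ = (A - B) * A⁻¹ * B := by
    rw [hM, transpose_sub, transpose_mul, transpose_mul, transpose_nonsing_inv, hAsymm, hBsymm,
      Matrix.mul_assoc]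
  refine ⟨hsymmM, ?_⟩
  have hA10 : A 1 0 = A 0 1 := by simpa using congrFun (congrFun hA.1 0) 1
  have hB10 : B 1 0 = B 0 1 := by simpa using congrFun (congrFun hB.1 0) 1
  have hA00 : 0 < A 0 0 := by
    have := hA.dotProduct_mulVec_pos (x := Pi.single 0 1) (by simp [funext_iff])
    simpa [dotProduct, mulVec, Fin.sum_univ_two] using this
  have hB00 : 0 < B 0 0 := by
    have := hB.dotProduct_mulVec_pos (x := Pi.single 0 1) (by simp [funext_iff])
    simpa [dotProduct, mulVec, Fin.sum_univ_two] using this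
  have hdA' : A 0 0 * A 1 1 - A 0 1 ^ 2 = 1 := by
    rw [Matrix.det_fin_two] at hdA
    linear_combination hdA + A 0 1 * hA10
  have hdB' : B 0 0 * B 1 1 - B 0 1 ^ 2 = 1 := by
    rw [Matrix.det_fin_two] at hdB
    linear_combination hdB + B 0 1 * hB10
  have hne' : ¬(A 0 0 = B 0 0 ∧ A 1 1 = B 1 1 ∧ A 0 1 = B 0 1) := by
    rintro ⟨h1, h2, h3⟩
    apply hne
    ext i j
    fin_cases i <;> fin_cases j <;> simp_all
  have hkey := key_ineq (A 0 0) (A 1 1) (A 0 1) (B 0 0) (B 1 1) (B 0 1)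
    hA00 hB00 hdA' hdB' hne'
  have hdetC : (A - B).det < 0 := by
    rw [Matrix.det_fin_two]
    simp only [Matrix.sub_apply]
    rw [hA10, hB10]
    nlinarith [hdA', hdB', hkey]
  have hdetM : ((A - B) * A⁻¹ * B).det < 0 := by
    rw [Matrix.det_mul, Matrix.det_mul, Matrix.det_nonsing_inv, hdA, hdB]
    simpa using hdetC
  refine ⟨hdetM, ?_⟩
  set M := (A - B) * A⁻¹ * B with hMdef
  have hM10 : M 1 0 = M 0 1 := by
    simpa using congrFun (congrFun hsymmM 0) 1
  have hdetM' : M 0 0 * M 1 1 - M 0 1 ^ 2 < 0 := by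
    rw [Matrix.det_fin_two] at hdetM
    rw [hM10] at hdetM
    nlinarith [hdetM]
  obtain ⟨x, y, hxy⟩ := quad_one (M 0 0) (M 0 1) (M 1 1) hdetM'
  refine ⟨![x, y], ?_⟩
  simp only [dotProduct, mulVec, Fin.sum_univ_two, Matrix.cons_val_zero, Matrix.cons_val_one,
    Matrix.head_cons]
  rw [hM10]
  linear_combination hxy
end
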